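/- Let $A_1, \ldots, A_r$ be positive semidefinite operators on a finite-dimensional Hilbert space, and let $P_s^* := \max\{\sum_{i=1}^r \operatorname{Tr} A_i E_i : E_i \ge 0, \sum_i E_i \le I\}$. Then $P_s^* \le \frac{1}{2(r-1)} \sum_{(k,l): k \ne l} \big(\frac{1}{2}\operatorname{Tr}(A_k + A_l) + \frac{1}{2}\|A_k - A_l\|_1\big)$. -/

import Mathlib

/-!
Pair up the outcomes. For `k ≠ l`, the two-outcome measurement `(E_k, E_l)` is a legitimate
POVM, and `2 (Tr A_k E_k + Tr A_l E_l) = Tr (A_k + A_l)(E_k + E_l) + Tr (A_k - A_l)(E_k - E_l)`.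
The first term is at most `Tr (A_k + A_l)` because `E_k + E_l ≤ I`, the second at most
`‖A_k - A_l‖₁` because `-I ≤ E_k - E_l ≤ I` and `|D| ± D ≥ 0`. Summing over the
`r (r - 1)` ordered pairs counts every `Tr A_i E_i` exactly `2 (r - 1)` times.
-/

open Matrix
open scoped ComplexOrder

noncomputable def matAbs {m : ℕ} (A : Matrix (Fin m) (Fin m) ℂ) : Matrix (Fin m) (Fin m) ℂ :=
  (Matrix.posSemidef_conjTranspose_mul_self A).1.eigenvectorUnitary.1 *
    diagonal (((↑) : ℝ → ℂ) ∘ Real.sqrt ∘ (Matrix.posSemidef_conjTranspose_mul_self A).1.eigenvalues) *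
    (star (Matrix.posSemidef_conjTranspose_mul_self A).1.eigenvectorUnitary : Matrix (Fin m) (Fin m) ℂ)

noncomputable def traceNorm {m : ℕ} (A : Matrix (Fin m) (Fin m) ℂ) : ℝ :=
  ((matAbs A).trace).re

open Classical in
noncomputable def psdSqrt {m : ℕ} (A : Matrix (Fin m) (Fin m) ℂ) : Matrix (Fin m) (Fin m) ℂ :=
  if h : A.PosSemidef then
    h.1.eigenvectorUnitary.1 * diagonal (((↑) : ℝ → ℂ) ∘ Real.sqrt ∘ h.1.eigenvalues) *
      (star h.1.eigenvectorUnitary : Matrix (Fin m) (Fin m) ℂ)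
  else 0

noncomputable def fid {m : ℕ} (A B : Matrix (Fin m) (Fin m) ℂ) : ℝ :=
  traceNorm (psdSqrt A * psdSqrt B)

noncomputable def matPosPart {m : ℕ} (A : Matrix (Fin m) (Fin m) ℂ) : Matrix (Fin m) (Fin m) ℂ :=
  (2⁻¹ : ℂ) • (matAbs A + A)

noncomputable def matNegPart {m : ℕ} (A : Matrix (Fin m) (Fin m) ℂ) : Matrix (Fin m) (Fin m) ℂ :=
  (2⁻¹ : ℂ) • (matAbs A - A)

section MatrixOrder

open scoped MatrixOrder

section Trace

variable {n 𝕜 : Type*} [Fintype n] [RCLike 𝕜]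

lemma Matrix.PosSemidef.trace_mul_nonneg {M N : Matrix n n 𝕜} (hM : M.PosSemidef)
    (hN : N.PosSemidef) : 0 ≤ (M * N).trace := by
  classical
  obtain ⟨B, rfl⟩ := CStarAlgebra.nonneg_iff_eq_star_mul_self.mp hN.nonneg
  rw [← mul_assoc, trace_mul_comm, ← mul_assoc]
  exact (hM.mul_mul_conjTranspose_same B).trace_nonneg

lemma Matrix.PosSemidef.trace_mul_le_trace [DecidableEq n] {A X : Matrix n n 𝕜}
    (hA : A.PosSemidef) (hX : (1 - X).PosSemidef) : (A * X).trace ≤ A.trace := by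
  have h := hA.trace_mul_nonneg hX
  rwa [mul_sub, mul_one, trace_sub, sub_nonneg] at h

end Trace

lemma posSemidef_one_sub_add_of_posSemidef_one_sub_sum {n 𝕜 ι : Type*} [RCLike 𝕜]
    [DecidableEq n] [Fintype ι] {E : ι → Matrix n n 𝕜} (hE : ∀ i, (E i).PosSemidef)
    (hE1 : (1 - ∑ i, E i).PosSemidef) {k l : ι} (hkl : k ≠ l) : (1 - (E k + E l)).PosSemidef :=
  le_iff.mp <| (Finset.add_le_sum (fun i _ => (hE i).nonneg) (Finset.mem_univ k)
    (Finset.mem_univ l) hkl).trans (le_iff.mpr hE1)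

section TraceNorm

variable {m : ℕ}

lemma matAbs_eq_cfc_sqrt (B : Matrix (Fin m) (Fin m) ℂ) : matAbs B = cfc Real.sqrt (Bᴴ * B) :=
  ((posSemidef_conjTranspose_mul_self B).1.cfc_eq _).symm

lemma matAbs_eq_cfc_abs {B : Matrix (Fin m) (Fin m) ℂ} (hB : B.IsHermitian) :
    matAbs B = cfc (fun x : ℝ => |x|) B := by
  rw [matAbs_eq_cfc_sqrt, hB.eq, ← sq, ← cfc_comp_pow Real.sqrt 2 B (ha := hB.isSelfAdjoint)]
  exact cfc_congr fun x _ => Real.sqrt_sq_eq_abs x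

lemma posSemidef_matAbs_add {B : Matrix (Fin m) (Fin m) ℂ} (hB : B.IsHermitian) :
    (matAbs B + B).PosSemidef := by
  rw [matAbs_eq_cfc_abs hB]
  nth_rw 2 [← cfc_id' ℝ B (ha := hB.isSelfAdjoint)]
  rw [← cfc_add ..]
  exact (cfc_nonneg fun x _ => by linarith [neg_abs_le x]).posSemidef

lemma posSemidef_matAbs_sub {B : Matrix (Fin m) (Fin m) ℂ} (hB : B.IsHermitian) :
    (matAbs B - B).PosSemidef := by
  rw [matAbs_eq_cfc_abs hB]
  nth_rw 2 [← cfc_id' ℝ B (ha := hB.isSelfAdjoint)]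
  rw [← cfc_sub ..]
  exact (cfc_nonneg fun x _ => by linarith [le_abs_self x]).posSemidef

/-- Hölder's inequality `Tr D X ≤ ‖D‖₁ ‖X‖_∞` for `‖X‖_∞ ≤ 1`. -/
lemma re_trace_mul_le_traceNorm {D X : Matrix (Fin m) (Fin m) ℂ} (hD : D.IsHermitian)
    (hX₁ : (1 - X).PosSemidef) (hX₂ : (1 + X).PosSemidef) :
    (D * X).trace.re ≤ traceNorm D := by
  have hplus := (posSemidef_matAbs_add hD).trace_mul_le_trace hX₁
  have hminus := (posSemidef_matAbs_sub hD).trace_mul_le_trace (X := -X) (by rwa [sub_neg_eq_add])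
  have h := Complex.re_le_re (add_le_add hplus hminus)
  simp only [add_mul, sub_mul, mul_neg, trace_add, trace_sub, trace_neg, Complex.add_re,
    Complex.sub_re, Complex.neg_re] at h
  rw [traceNorm]
  linarith

lemma re_trace_mul_add_re_trace_mul_le {Ak Al Ek El : Matrix (Fin m) (Fin m) ℂ}
    (hAk : Ak.PosSemidef) (hAl : Al.PosSemidef) (hEk : Ek.PosSemidef) (hEl : El.PosSemidef)
    (hE : (1 - (Ek + El)).PosSemidef) :
    (Ak * Ek).trace.re + (Al * El).trace.re ≤
      (1/2) * (Ak + Al).trace.re + (1/2) * traceNorm (Ak - Al) := by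
  have hsum := Complex.re_le_re ((hAk.add hAl).trace_mul_le_trace hE)
  have hdiff : ((Ak - Al) * (Ek - El)).trace.re ≤ traceNorm (Ak - Al) := by
    refine re_trace_mul_le_traceNorm (hAk.1.sub hAl.1) ?_ ?_
    · convert hE.add (hEl.add hEl) using 1; abel
    · convert hE.add (hEk.add hEk) using 1; abel
  have hsplit : (Ak + Al) * (Ek + El) + (Ak - Al) * (Ek - El) =
      Ak * Ek + Ak * Ek + (Al * El + Al * El) := by noncomm_ring
  have h := congrArg (fun M => M.trace.re) hsplit
  simp only [trace_add, Complex.add_re] at h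
  linarith

end TraceNorm

end MatrixOrder

lemma sum_sum_ite_eq_zero_add {ι : Type*} [Fintype ι] [DecidableEq ι] (t : ι → ℝ) :
    ∑ k, ∑ l, (if k = l then 0 else t k + t l) = 2 * (Fintype.card ι - 1) * ∑ i, t i := by
  have h k l : (if k = l then 0 else t k + t l) = t k + t l - if k = l then t k + t l else 0 := by
    split_ifs <;> simp
  simp only [h, Finset.sum_sub_distrib, Finset.sum_ite_eq, Finset.mem_univ, if_true,
    Finset.sum_add_distrib, Finset.sum_const, Finset.card_univ, nsmul_eq_mul, ← Finset.mul_sum]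
  ring

theorem qiu_lower_decoupling {d r : ℕ} (hr : 2 ≤ r)
    (A : Fin r → Matrix (Fin d) (Fin d) ℂ) (hA : ∀ i, (A i).PosSemidef)
    (E : Fin r → Matrix (Fin d) (Fin d) ℂ) (hE : ∀ i, (E i).PosSemidef)
    (hE1 : (1 - ∑ i, E i).PosSemidef) :
    ∑ i, ((A i * E i).trace).re ≤
      (1 / (2 * ((r : ℝ) - 1))) * ∑ k, ∑ l,
        (if k = l then 0 else
          (1/2) * (((A k + A l).trace).re) + (1/2) * traceNorm (A k - A l)) := by
  have hr' : (0 : ℝ) < 2 * ((r : ℝ) - 1) := by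
    have : (2 : ℝ) ≤ r := by exact_mod_cast hr
    linarith
  set t : Fin r → ℝ := fun i => ((A i * E i).trace).re
  calc ∑ i, t i
        = (1 / (2 * ((r : ℝ) - 1))) * ∑ k, ∑ l, (if k = l then 0 else t k + t l) := by
        rw [sum_sum_ite_eq_zero_add, Fintype.card_fin, ← mul_assoc, one_div,
          inv_mul_cancel₀ hr'.ne', one_mul]
    _ ≤ _ := by
        refine mul_le_mul_of_nonneg_left (Finset.sum_le_sum fun k _ => Finset.sum_le_sum
          fun l _ => ?_) (by positivity)
        split_ifs with hkl
        · exact le_rfl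
        · exact re_trace_mul_add_re_trace_mul_le (hA k) (hA l) (hE k) (hE l)
            (posSemidef_one_sub_add_of_posSemidef_one_sub_sum hE hE1 hkl)
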